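/- The density of the optimal edge set of DSS-INV is a monotonically non-decreasing function of λ: if 0 ≤ λ₁ < λ₂ and X₁, X₂ are nonempty subsets of E maximizing O_{λ₁} and O_{λ₂} respectively over all nonempty subsets of E, then D(X₁) ≤ D(X₂). -/
import Mathlib


open Finset

/-- The set of vertices incident to some edge of `X`. -/
noncomputable def vertsOf {V : Type*} [Fintype V] (X : Finset (Sym2 V)) : Finset V :=
  @Finset.filter V (fun v => ∃ e ∈ X, v ∈ e) (Classical.decPred _) Finset.univ

/-- The density `D(X) = |X| / |V(X)|` of the subgraph induced by the edge set `X`. -/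
noncomputable def edens {V : Type*} [Fintype V] (X : Finset (Sym2 V)) : ℝ :=
  (X.card : ℝ) / ((vertsOf X).card : ℝ)

/-- The sum of `s` over all unordered pairs of distinct edges of `X`
(for symmetric `s`, this is half of the sum over ordered pairs of distinct edges). -/
noncomputable def pairSum {V : Type*} [DecidableEq V]
    (s : Sym2 V → Sym2 V → ℝ) (X : Finset (Sym2 V)) : ℝ :=
  (∑ p ∈ X.offDiag, s p.1 p.2) / 2

/-- The subgraph edge similarity `S(X)`. -/
noncomputable def esim {V : Type*} [Fintype V] [DecidableEq V]
    (s : Sym2 V → Sym2 V → ℝ) (X : Finset (Sym2 V)) : ℝ :=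
  pairSum s X / (X.card : ℝ)


lemma edens_pos {V : Type*} [Fintype V] {X : Finset (Sym2 V)} (hX : X.Nonempty) :
    0 < edens X := by
  obtain ⟨e, he⟩ := hX
  have hv : (vertsOf X).Nonempty := by
    refine ⟨e.out.1, ?_⟩
    simp only [vertsOf, Finset.mem_filter, Finset.mem_univ, true_and]
    exact ⟨e, he, Sym2.out_fst_mem e⟩
  have h1 : (0:ℝ) < X.card := by exact_mod_cast Finset.card_pos.mpr ⟨e, he⟩
  have h2 : (0:ℝ) < (vertsOf X).card := by exact_mod_cast Finset.card_pos.mpr hv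
  exact div_pos h1 h2

/-- The density of the optimal edge set of DSS-INV is non-decreasing in `λ`: for
`0 ≤ λ₁ < λ₂` and respective maximizers `X₁`, `X₂`, we have `D(X₁) ≤ D(X₂)`. -/
theorem dssInv_optimal_density_monotone {V : Type*} [Fintype V] [DecidableEq V]
    (E : Finset (Sym2 V)) (hE : ∀ e ∈ E, ¬ e.IsDiag)
    (s : Sym2 V → Sym2 V → ℝ)
    (hs_symm : ∀ e d, s e d = s d e) (hs_nonneg : ∀ e d, 0 ≤ s e d)
    (lam1 lam2 : ℝ) (hlam1 : 0 ≤ lam1) (hlam12 : lam1 < lam2)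
    (X1 X2 : Finset (Sym2 V)) (hX1 : X1 ⊆ E) (hX1ne : X1.Nonempty)
    (hX2 : X2 ⊆ E) (hX2ne : X2.Nonempty)
    (hmaxX1 : ∀ X : Finset (Sym2 V), X ⊆ E → X.Nonempty →
      esim s X - lam1 / edens X ≤ esim s X1 - lam1 / edens X1)
    (hmaxX2 : ∀ X : Finset (Sym2 V), X ⊆ E → X.Nonempty →
      esim s X - lam2 / edens X ≤ esim s X2 - lam2 / edens X2) :
    edens X1 ≤ edens X2 := by
  have h1 := hmaxX1 X2 hX2 hX2ne
  have h2 := hmaxX2 X1 hX1 hX1ne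
  have d1 : 0 < edens X1 := edens_pos hX1ne
  have d2 : 0 < edens X2 := edens_pos hX2ne
  have key : lam1 / edens X1 + lam2 / edens X2 ≤ lam1 / edens X2 + lam2 / edens X1 := by
    linarith
  rw [div_add_div _ _ d1.ne' d2.ne', div_add_div _ _ d2.ne' d1.ne',
    div_le_div_iff₀ (by positivity) (by positivity)] at key
  by_contra h
  push_neg at h
  nlinarith [mul_pos (mul_pos (sub_pos.mpr hlam12) (sub_pos.mpr h)) (mul_pos d1 d2)]
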